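/- arXiv:2202.10394 — 2 statements merged into one kernel-verified Lean document; each statement's English description precedes it below -/
import Mathlib

section
/- Let a ∈ ℝ and let f : [a,∞) → ℝ be Lebesgue integrable on every compact subinterval of [a,∞) such that the improper integral ∫_a^∞ f exists. Let g : [a,∞) → ℝ be Lebesgue integrable on [a,∞) and of bounded variation on [a,∞); set F(x) := ∫_a^x f and G(x) := ∫_a^x g. Then Fg is Lebesgue integrable on [a,∞), lim_{x→∞} F(x)G(x) exists, the improper integral ∫_a^∞ fG exists, and ∫_a^∞ fG = lim_{x→∞} F(x)G(x) − ∫_a^∞ Fg. -/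
open MeasureTheory Filter Topology intervalIntegral Set

/-!
`F` is continuous and converges at infinity, hence is bounded on `[a, ∞)`, so `F g` is integrable
there. On each `[a, c]` the primitives `F` and `G` are absolutely continuous with derivatives `f`
and `g` almost everywhere, so integration by parts gives
`∫_a^c f G = F(c) G(c) - ∫_a^c F g`, and both terms on the right converge as `c → ∞`.
-/

lemma ContinuousOn.exists_bound_Ici_of_tendsto {E : Type*} [SeminormedAddCommGroup E]
    {f : ℝ → E} {a : ℝ} {l : E} (hf : ContinuousOn f (Ici a))
    (hlim : Tendsto f atTop (𝓝 l)) : ∃ C, ∀ x ∈ Ici a, ‖f x‖ ≤ C := by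
  obtain ⟨N, hN⟩ :=
    (hlim.norm.eventually (eventually_le_nhds (lt_add_one ‖l‖))).exists_forall_of_atTop
  obtain ⟨C, hC⟩ := (isCompact_Icc (a := a) (b := max a N)).exists_bound_of_continuousOn
    (hf.mono Icc_subset_Ici_self)
  refine ⟨max C (‖l‖ + 1), fun x hx => ?_⟩
  rcases le_total x (max a N) with hxN | hNx
  · exact (hC x ⟨hx, hxN⟩).trans (le_max_left _ _)
  · exact (hN x ((le_max_right a N).trans hNx)).trans (le_max_right _ _)

lemma continuousOn_primitive_Ici {E : Type*} [NormedAddCommGroup E] [NormedSpace ℝ E]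
    {μ : Measure ℝ} [NullSingletonClass μ] {f : ℝ → E} {a : ℝ}
    (hf : ∀ c, a ≤ c → IntegrableOn f (Icc a c) μ) :
    ContinuousOn (fun x => ∫ t in a..x, f t ∂μ) (Ici a) := by
  intro x (hx : a ≤ x)
  have hint : IntervalIntegrable f μ (min a a) (max a (x + 1)) := by
    rw [min_self, max_eq_right (by linarith), intervalIntegrable_iff_integrableOn_Icc_of_le
      (by linarith)]
    exact hf _ (by linarith)
  exact (continuousWithinAt_primitive (measure_singleton x) hint).mono_of_mem_nhdsWithin
    (Ici_inter_Iic (a := a) ▸ inter_mem_nhdsWithin _ (Iic_mem_nhds (lt_add_one x)))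

theorem IntervalIntegrable.ae_deriv_primitive_eq {E : Type*} [NormedAddCommGroup E]
    [NormedSpace ℝ E] [CompleteSpace E] {f : ℝ → E} {a b : ℝ}
    (hf : IntervalIntegrable f volume a b) :
    ∀ᵐ x, x ∈ uIoc a b → deriv (fun x => ∫ t in a..x, f t) x = f x := by
  filter_upwards [hf.ae_hasDerivAt_integral] with x hx hxab
  exact (hx (uIoc_subset_uIcc hxab) a left_mem_uIcc).deriv

theorem IntervalIntegrable.integral_mul_primitive_eq {f g : ℝ → ℝ} {a b : ℝ}
    (hf : IntervalIntegrable f volume a b) (hg : IntervalIntegrable g volume a b) :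
    ∫ x in a..b, f x * ∫ t in a..x, g t =
      (∫ x in a..b, f x) * (∫ x in a..b, g x) - ∫ x in a..b, (∫ t in a..x, f t) * g x := by
  have ibp := (hf.absolutelyContinuousOnInterval_intervalIntegral left_mem_uIcc)
    |>.integral_mul_deriv_eq_deriv_mul (hg.absolutelyContinuousOnInterval_intervalIntegral
      left_mem_uIcc)
  have hderiv_g : ∫ x in a..b, (∫ t in a..x, f t) * deriv (fun x => ∫ t in a..x, g t) x =
      ∫ x in a..b, (∫ t in a..x, f t) * g x :=
    intervalIntegral.integral_congr_ae <| by
      filter_upwards [hg.ae_deriv_primitive_eq] with x hx hxab using by rw [hx hxab]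
  have hderiv_f : ∫ x in a..b, deriv (fun x => ∫ t in a..x, f t) x * ∫ t in a..x, g t =
      ∫ x in a..b, f x * ∫ t in a..x, g t :=
    intervalIntegral.integral_congr_ae <| by
      filter_upwards [hf.ae_deriv_primitive_eq] with x hx hxab using by rw [hx hxab]
  rw [hderiv_g, hderiv_f] at ibp
  simp only [integral_same, zero_mul, sub_zero] at ibp
  linarith

theorem integration_by_parts_improper_general (a : ℝ) (f g : ℝ → ℝ)
    (hf : ∀ c, a ≤ c → IntegrableOn f (Set.Icc a c))
    (F : ℝ → ℝ) (hF : ∀ x, F x = ∫ t in a..x, f t)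
    (hfimp : ∃ I : ℝ, Tendsto (fun c => ∫ x in a..c, f x) atTop (𝓝 I))
    (hg : IntegrableOn g (Set.Ici a))
    (G : ℝ → ℝ) (hG : ∀ x, G x = ∫ t in a..x, g t) :
    IntegrableOn (fun x => F x * g x) (Set.Ici a) ∧
    ∃ L : ℝ, Tendsto (fun x => F x * G x) atTop (𝓝 L) ∧
      Tendsto (fun c => ∫ x in a..c, f x * G x) atTop
        (𝓝 (L - ∫ x in Set.Ici a, F x * g x)) := by
  obtain rfl : F = fun x => ∫ t in a..x, f t := funext hF
  obtain rfl : G = fun x => ∫ t in a..x, g t := funext hG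
  obtain ⟨I, hFlim⟩ := hfimp
  have hGlim := intervalIntegral_tendsto_integral_Ioi a (hg.mono_set Ioi_subset_Ici_self)
    tendsto_id
  have hFcont := continuousOn_primitive_Ici hf
  obtain ⟨M, hM⟩ := hFcont.exists_bound_Ici_of_tendsto hFlim
  have hFg : IntegrableOn (fun x => (∫ t in a..x, f t) * g x) (Ici a) :=
    hg.bdd_mul (hFcont.aestronglyMeasurable measurableSet_Ici)
      ((ae_restrict_iff' measurableSet_Ici).2 (ae_of_all _ hM))
  refine ⟨hFg, _, hFlim.mul hGlim, ?_⟩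
  rw [integral_Ici_eq_integral_Ioi]
  refine ((hFlim.mul hGlim).sub (intervalIntegral_tendsto_integral_Ioi a
    (hFg.mono_set Ioi_subset_Ici_self) tendsto_id)).congr' ?_
  filter_upwards [eventually_ge_atTop a] with c hc
  have hfc := (intervalIntegrable_iff_integrableOn_Icc_of_le hc).2 (hf c hc)
  have hgc := (intervalIntegrable_iff_integrableOn_Icc_of_le hc).2
    (hg.mono_set Icc_subset_Ici_self)
  exact (hfc.integral_mul_primitive_eq hgc).symm

/-- **Integration by parts for the improper integral.**
Suppose `f` is Lebesgue integrable on every compact subinterval of `[a,∞)` and the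
improper integral `∫_a^∞ f` exists; let `g` be Lebesgue integrable and of bounded
variation on `[a,∞)`, with `F x = ∫_a^x f` and `G x = ∫_a^x g`. Then `F·g` is Lebesgue
integrable on `[a,∞)`, `lim_{x→∞} F x * G x` exists, the improper integral `∫_a^∞ f·G`
exists, and `∫_a^∞ f·G = lim_{x→∞} F x G x − ∫_a^∞ F·g`. -/
theorem integration_by_parts_improper (a : ℝ) (f g : ℝ → ℝ)
    (hf : ∀ c, a ≤ c → IntegrableOn f (Set.Icc a c))
    (F : ℝ → ℝ) (hF : ∀ x, F x = ∫ t in a..x, f t)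
    (hfimp : ∃ I : ℝ, Tendsto (fun c => ∫ x in a..c, f x) atTop (𝓝 I))
    (hg : IntegrableOn g (Set.Ici a))
    (hgBV : BoundedVariationOn g (Set.Ici a))
    (G : ℝ → ℝ) (hG : ∀ x, G x = ∫ t in a..x, g t) :
    IntegrableOn (fun x => F x * g x) (Set.Ici a) ∧
    ∃ L : ℝ, Tendsto (fun x => F x * G x) atTop (𝓝 L) ∧
      Tendsto (fun c => ∫ x in a..c, f x * G x) atTop
        (𝓝 (L - ∫ x in Set.Ici a, F x * g x)) :=
  integration_by_parts_improper_general a f g hf F hF hfimp hg G hG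
end

section
/- Let f : ℝ → ℝ be differentiable on ℝ with derivative f′ Lebesgue integrable on every compact interval, and suppose the improper integrals ∫_{-∞}^∞ f and ∫_{-∞}^∞ f′ both exist. If y ∈ ℝ is such that f̂(y) = ∫_{-∞}^∞ f(x)e^{−2πixy} dx exists as an improper integral, then the improper integral (f′)^(y) = ∫_{-∞}^∞ f′(x)e^{−2πixy} dx exists and (f′)^(y) = 2πi y · f̂(y). -/
open MeasureTheory Filter Topology intervalIntegral

/-- The improper integral `∫_{-∞}^∞ h = L` (real-valued). -/
def HasImpInt (h : ℝ → ℝ) (L : ℝ) : Prop :=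
  ∃ L₁ L₂ : ℝ,
    Tendsto (fun c => ∫ x in c..(0:ℝ), h x) atBot (𝓝 L₁) ∧
    Tendsto (fun c => ∫ x in (0:ℝ)..c, h x) atTop (𝓝 L₂) ∧ L = L₁ + L₂

/-- The improper integral `∫_{-∞}^∞ h = z` (complex-valued). -/
def HasImpIntC (h : ℝ → ℂ) (z : ℂ) : Prop :=
  ∃ z₁ z₂ : ℂ,
    Tendsto (fun c => ∫ x in c..(0:ℝ), h x) atBot (𝓝 z₁) ∧
    Tendsto (fun c => ∫ x in (0:ℝ)..c, h x) atTop (𝓝 z₂) ∧ z = z₁ + z₂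

/-- The Fourier kernel `e^{-2πixy}`. -/
noncomputable def fourierKernel (x y : ℝ) : ℂ :=
  Complex.exp (-(2 * Real.pi * Complex.I * x * y))

/-! Integrate by parts on `[c, d]`: `∫_c^d f' e(x) = [f e]_c^d + 2πiy ∫_c^d f e`, where
`e(x) = e^{-2πixy}` has modulus one. Since `∫ f'` converges, `f` has limits at `±∞`; these must
vanish because `∫ f` converges too (the integral of `f` over `[c, c + 1]` tends both to the limit
and to `0`). So the boundary terms tend to `0` and the identity passes to the limit. -/

section Limits
variable {E : Type*} [NormedAddCommGroup E] [NormedSpace ℝ E] [CompleteSpace E]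

theorem tendsto_integral_self_add_one_of_tendsto {f : ℝ → E} (hf : Continuous f) {M : E}
    (hM : Tendsto f atTop (𝓝 M)) :
    Tendsto (fun c => ∫ x in c..c + 1, f x) atTop (𝓝 M) := by
  have hshift : ∀ c, ∫ x in c..c + 1, f x = ∫ t in (0:ℝ)..1, f (c + t) := fun c => by
    simp [integral_comp_add_left]
  obtain ⟨a, ha⟩ := eventually_atTop.1 (hM.norm.eventually (gt_mem_nhds (lt_add_one ‖M‖)))
  simp_rw [hshift]
  have hlim := tendsto_integral_filter_of_dominated_convergence (μ := volume) (a := 0) (b := 1)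
    (F := fun c t => f (c + t)) (f := fun _ => M) (fun _ => ‖M‖ + 1)
    (.of_forall fun c => (hf.comp (continuous_const_add c)).aestronglyMeasurable)
    ?_ intervalIntegrable_const
    (.of_forall fun t _ => hM.comp (tendsto_atTop_add_const_right _ t tendsto_id))
  · simpa using hlim
  · filter_upwards [eventually_ge_atTop a] with c hc
    refine .of_forall fun t ht => (ha _ ?_).le
    rw [Set.uIoc_of_le zero_le_one] at ht
    linarith [ht.1]

theorem eq_zero_of_tendsto_of_tendsto_integral_atTop {f : ℝ → E} (hf : Continuous f) {M L : E}
    (hM : Tendsto f atTop (𝓝 M)) (hL : Tendsto (fun c => ∫ x in (0:ℝ)..c, f x) atTop (𝓝 L)) :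
    M = 0 := by
  have hdiff : Tendsto (fun c => ∫ x in c..c + 1, f x) atTop (𝓝 0) := by
    have := (hL.comp (tendsto_atTop_add_const_right _ 1 tendsto_id)).sub hL
    rw [sub_self] at this
    exact this.congr fun c => integral_interval_sub_left (hf.intervalIntegrable _ _) (hf.intervalIntegrable _ _)
  exact tendsto_nhds_unique (tendsto_integral_self_add_one_of_tendsto hf hM) hdiff

theorem eq_zero_of_tendsto_of_tendsto_integral_atBot {f : ℝ → E} (hf : Continuous f) {M L : E}
    (hM : Tendsto f atBot (𝓝 M)) (hL : Tendsto (fun c => ∫ x in c..(0:ℝ), f x) atBot (𝓝 L)) :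
    M = 0 := by
  refine eq_zero_of_tendsto_of_tendsto_integral_atTop (hf.comp continuous_neg)
    (hM.comp tendsto_neg_atTop_atBot) ((hL.comp tendsto_neg_atTop_atBot).congr fun c => ?_)
  simp [integral_comp_neg (fun x => f x)]

theorem tendsto_of_tendsto_integral_deriv_right {f f' : ℝ → E} {l : Filter ℝ} {a : ℝ} {L : E}
    (hderiv : ∀ x, HasDerivAt f (f' x) x)
    (hf' : ∀ c d, IntervalIntegrable f' volume c d)
    (hL : Tendsto (fun c => ∫ x in a..c, f' x) l (𝓝 L)) : Tendsto f l (𝓝 (f a + L)) :=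
  (hL.const_add (f a)).congr fun c => by
    rw [integral_eq_sub_of_hasDerivAt (fun x _ => hderiv x) (hf' a c), add_sub_cancel]

theorem tendsto_of_tendsto_integral_deriv_left {f f' : ℝ → E} {l : Filter ℝ} {a : ℝ} {L : E}
    (hderiv : ∀ x, HasDerivAt f (f' x) x)
    (hf' : ∀ c d, IntervalIntegrable f' volume c d)
    (hL : Tendsto (fun c => ∫ x in c..a, f' x) l (𝓝 L)) : Tendsto f l (𝓝 (f a - L)) :=
  (hL.const_sub (f a)).congr fun c => by
    rw [integral_eq_sub_of_hasDerivAt (fun x _ => hderiv x) (hf' c a), sub_sub_cancel]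

end Limits

section HasImpInt
variable {f f' : ℝ → ℝ} {L L' : ℝ}

theorem HasImpInt.tendsto_atTop_zero (hderiv : ∀ x, HasDerivAt f (f' x) x)
    (hf' : ∀ c d, IntervalIntegrable f' volume c d) (hf : HasImpInt f L)
    (hf'imp : HasImpInt f' L') : Tendsto f atTop (𝓝 0) := by
  obtain ⟨_, _, _, hf_top, _⟩ := hf
  obtain ⟨_, _, _, hf'_top, _⟩ := hf'imp
  have hlim := tendsto_of_tendsto_integral_deriv_right hderiv hf' hf'_top
  have hcont : Continuous f := continuous_iff_continuousAt.2 fun x => (hderiv x).continuousAt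
  rwa [← eq_zero_of_tendsto_of_tendsto_integral_atTop hcont hlim hf_top]

theorem HasImpInt.tendsto_atBot_zero (hderiv : ∀ x, HasDerivAt f (f' x) x)
    (hf' : ∀ c d, IntervalIntegrable f' volume c d) (hf : HasImpInt f L)
    (hf'imp : HasImpInt f' L') : Tendsto f atBot (𝓝 0) := by
  obtain ⟨_, _, hf_bot, _, _⟩ := hf
  obtain ⟨_, _, hf'_bot, _, _⟩ := hf'imp
  have hlim := tendsto_of_tendsto_integral_deriv_left hderiv hf' hf'_bot
  have hcont : Continuous f := continuous_iff_continuousAt.2 fun x => (hderiv x).continuousAt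
  rwa [← eq_zero_of_tendsto_of_tendsto_integral_atBot hcont hlim hf_bot]

end HasImpInt

section FourierKernel
variable (y : ℝ)

theorem hasDerivAt_fourierKernel (x : ℝ) :
    HasDerivAt (fun x => fourierKernel x y)
      (-(2 * Real.pi * Complex.I * y) * fourierKernel x y) x := by
  have h := ((hasDerivAt_id (x : ℂ)).const_mul (-(2 * Real.pi * Complex.I * y))).cexp.comp_ofReal
  convert h using 1 <;> simp [fourierKernel, mul_comm, mul_left_comm]

theorem norm_fourierKernel (x : ℝ) : ‖fourierKernel x y‖ = 1 := by
  simp [fourierKernel, Complex.norm_exp]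

theorem continuous_fourierKernel : Continuous fun x => fourierKernel x y := by
  unfold fourierKernel
  fun_prop

theorem fourierKernel_zero_left : fourierKernel 0 y = 1 := by
  simp [fourierKernel]

theorem tendsto_ofReal_mul_fourierKernel_zero {f : ℝ → ℝ} {l : Filter ℝ}
    (hf : Tendsto f l (𝓝 0)) : Tendsto (fun c => (f c : ℂ) * fourierKernel c y) l (𝓝 0) := by
  rw [tendsto_zero_iff_norm_tendsto_zero]
  simpa [norm_fourierKernel] using hf.norm

theorem integral_deriv_mul_fourierKernel {f f' : ℝ → ℝ} {c d : ℝ}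
    (hderiv : ∀ x, HasDerivAt f (f' x) x) (hf' : IntervalIntegrable f' volume c d) :
    ∫ x in c..d, (f' x : ℂ) * fourierKernel x y
      = f d * fourierKernel d y - f c * fourierKernel c y
        + 2 * Real.pi * Complex.I * y * ∫ x in c..d, (f x : ℂ) * fourierKernel x y := by
  have ibp := integral_mul_deriv_eq_deriv_mul (fun x _ => (hderiv x).ofReal_comp)
    (fun x _ => hasDerivAt_fourierKernel y x) ⟨hf'.1.ofReal, hf'.2.ofReal⟩
    ((continuous_const.mul (continuous_fourierKernel y)).intervalIntegrable c d)
  simp only [mul_left_comm _ (-_ : ℂ), intervalIntegral.integral_const_mul] at ibp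
  linear_combination ibp

end FourierKernel

/-- **Fourier transform of the derivative.** If `f` is differentiable with locally
integrable derivative `f'`, the improper integrals `∫_{-∞}^∞ f` and `∫_{-∞}^∞ f'` exist,
and `f̂(y)` exists as an improper integral, then `(f')^(y)` exists as an improper
integral and equals `2πiy·f̂(y)`. -/
theorem fourier_transform_of_deriv (f f' : ℝ → ℝ) (y : ℝ) (zf : ℂ)
    (hderiv : ∀ x : ℝ, HasDerivAt f (f' x) x)
    (hf'loc : ∀ c d : ℝ, IntervalIntegrable f' volume c d)
    (hfimp : ∃ L : ℝ, HasImpInt f L)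
    (hf'imp : ∃ L : ℝ, HasImpInt f' L)
    (hzf : HasImpIntC (fun x => (f x : ℂ) * fourierKernel x y) zf) :
    HasImpIntC (fun x => (f' x : ℂ) * fourierKernel x y)
      (2 * Real.pi * Complex.I * y * zf) := by
  obtain ⟨_, hf⟩ := hfimp
  obtain ⟨_, hf'⟩ := hf'imp
  obtain ⟨z₁, z₂, hz₁, hz₂, rfl⟩ := hzf
  have hbot := tendsto_ofReal_mul_fourierKernel_zero y (hf.tendsto_atBot_zero hderiv hf'loc hf')
  have htop := tendsto_ofReal_mul_fourierKernel_zero y (hf.tendsto_atTop_zero hderiv hf'loc hf')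
  have ibp c d := integral_deriv_mul_fourierKernel y hderiv (hf'loc c d)
  refine ⟨f 0 + 2 * Real.pi * Complex.I * y * z₁, -f 0 + 2 * Real.pi * Complex.I * y * z₂,
    ?_, ?_, by ring⟩
  · simp only [ibp, fourierKernel_zero_left, mul_one]
    simpa using (tendsto_const_nhds.sub hbot).add (hz₁.const_mul (2 * Real.pi * Complex.I * y))
  · simp only [ibp, fourierKernel_zero_left, mul_one]
    simpa [sub_eq_neg_add] using
      (htop.sub tendsto_const_nhds).add (hz₂.const_mul (2 * Real.pi * Complex.I * y))
end
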